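/- Let p, q, d, T be positive integers with d < q, and let r ≥ 0, m > 0, c > 0 be real numbers. Let (x_1, y_1), …, (x_T, y_T) be a sequence with x_t ∈ ℝ^p, ‖x_t‖₂² ≤ r, and y_t ∈ {0,1}^q; for each t let y^{(t)} ∈ {0,1}^q be the label vector of the nearest neighbour used on round t. Let P ∈ ℝ^{p×q}, let V_1, …, V_{T+1} ∈ ℝ^{q×d} with V_1 nonzero, let U ∈ ℝ^{q×d}, and let λ_1, …, λ_T ∈ ℝ with λ_t ≥ m. Define the per-round loss l_t = max{0, ‖y_t − y^{(t)}‖₁ − (‖V_tᵀPᵀx_t − V_tᵀy^{(t)}‖₂² − ‖V_tᵀPᵀx_t − V_tᵀy_t‖₂²)}. Suppose that for every t the progress Ψ_t = ‖V_t − U‖_F² − ‖V_{t+1} − U‖_F² satisfies Ψ_t ≥ c²λ_t‖V_t‖_F² + q·c²·λ_t/(‖P‖_F²·r + q), and that ‖Pᵀx_t − y_t‖₂² ≤ ‖P‖_F²·r + q for every t. Then the cumulative loss is bounded as ∑_{t=1}^T l_t ≤ ‖V_1 − U‖_F²·(‖P‖_F²·r + q)/(m·c²). -/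

import Mathlib

/-! With `R = ‖P‖_F² r + q`, the hinge loss of round `t` is at most `‖V_t‖_F² R + q`: the ℓ₁ term
is at most `q` for binary labels, and by Cauchy–Schwarz `‖V_tᵀ(Pᵀx_t − y_t)‖₂² ≤ ‖V_t‖_F² R`.
Since `λ_t ≥ m`, this is at most `R / (m c²)` times the assumed lower bound on `Ψ_t`, and the
progress terms `Ψ_t` telescope to at most `‖V_1 − U‖_F²`. -/

open Matrix

/-- Squared Frobenius norm of a real matrix: `‖A‖_F² = ∑ i j, A i j ^ 2`. -/
noncomputable def frobSq {m n : ℕ} (A : Matrix (Fin m) (Fin n) ℝ) : ℝ :=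
  ∑ i, ∑ j, (A i j) ^ 2

/-- Squared Euclidean norm on `ℝ^n`: `‖v‖₂² = ∑ i, v i ^ 2`. -/
noncomputable def l2normSq {n : ℕ} (v : Fin n → ℝ) : ℝ := ∑ i, (v i) ^ 2

/-- ℓ₁ norm on `ℝ^n`: `‖v‖₁ = ∑ i, |v i|`. -/
noncomputable def l1norm {n : ℕ} (v : Fin n → ℝ) : ℝ := ∑ i, |v i|

lemma frobSq_nonneg {m n : ℕ} (A : Matrix (Fin m) (Fin n) ℝ) : 0 ≤ frobSq A :=
  Finset.sum_nonneg fun _ _ => Finset.sum_nonneg fun _ _ => sq_nonneg _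

lemma l2normSq_nonneg {n : ℕ} (v : Fin n → ℝ) : 0 ≤ l2normSq v :=
  Finset.sum_nonneg fun _ _ => sq_nonneg _

lemma l2normSq_transpose_mulVec_le {m n : ℕ} (A : Matrix (Fin m) (Fin n) ℝ) (z : Fin m → ℝ) :
    l2normSq (Aᵀ *ᵥ z) ≤ frobSq A * l2normSq z := by
  calc l2normSq (Aᵀ *ᵥ z) = ∑ j, (∑ i, A i j * z i) ^ 2 := rfl
    _ ≤ ∑ j, (∑ i, A i j ^ 2) * l2normSq z :=
        Finset.sum_le_sum fun j _ => Finset.sum_mul_sq_le_sq_mul_sq _ (fun i => A i j) z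
    _ = frobSq A * l2normSq z := by rw [← Finset.sum_mul, Finset.sum_comm]; rfl

lemma l1norm_sub_le_of_binary {n : ℕ} {y y' : Fin n → ℝ} (hy : ∀ i, y i = 0 ∨ y i = 1)
    (hy' : ∀ i, y' i = 0 ∨ y' i = 1) : l1norm (y - y') ≤ n := by
  calc l1norm (y - y') ≤ ∑ _i : Fin n, (1 : ℝ) := Finset.sum_le_sum fun i _ => by
        rcases hy i with h | h <;> rcases hy' i with h' | h' <;> simp [h, h']
    _ = n := by simp

lemma sum_Icc_sub_succ_le {f : ℕ → ℝ} {T : ℕ} (hT : 0 < T) (hf : 0 ≤ f (T + 1)) :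
    ∑ t ∈ Finset.Icc 1 T, (f t - f (t + 1)) ≤ f 1 := by
  have := Finset.sum_Icc_sub hT f
  rw [← neg_neg (∑ t ∈ _, _), ← Finset.sum_neg_distrib]
  simp only [neg_sub]
  linarith

lemma hingeLoss_le {q d : ℕ} (V : Matrix (Fin q) (Fin d) ℝ) (z y y' : Fin q → ℝ) {R : ℝ}
    (hy : ∀ i, y i = 0 ∨ y i = 1) (hy' : ∀ i, y' i = 0 ∨ y' i = 1)
    (hz : l2normSq (z - y) ≤ R) :
    max 0 (l1norm (y - y') - (l2normSq (Vᵀ *ᵥ z - Vᵀ *ᵥ y') - l2normSq (Vᵀ *ᵥ z - Vᵀ *ᵥ y)))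
      ≤ frobSq V * R + q := by
  have hR : 0 ≤ R := (l2normSq_nonneg _).trans hz
  have hfar : l2normSq (Vᵀ *ᵥ z - Vᵀ *ᵥ y) ≤ frobSq V * R := by
    rw [← mulVec_sub]
    exact (l2normSq_transpose_mulVec_le V _).trans
      (mul_le_mul_of_nonneg_left hz (frobSq_nonneg V))
  have := l1norm_sub_le_of_binary hy hy'
  have := l2normSq_nonneg (Vᵀ *ᵥ z - Vᵀ *ᵥ y')
  have := mul_nonneg (frobSq_nonneg V) hR
  exact max_le (by positivity) (by linarith)

lemma mul_add_le_div_mul_of_progress {a q R m c lam Ψ : ℝ} (ha : 0 ≤ a) (hq : 0 ≤ q)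
    (hR : 0 < R) (hm : 0 < m) (hc : 0 < c) (hlam : m ≤ lam)
    (hΨ : c ^ 2 * lam * a + q * c ^ 2 * lam / R ≤ Ψ) :
    a * R + q ≤ R / (m * c ^ 2) * Ψ := by
  have hscale : R / (m * c ^ 2) * (c ^ 2 * lam * a + q * c ^ 2 * lam / R)
      = lam / m * (a * R + q) := by
    field_simp
  calc a * R + q ≤ lam / m * (a * R + q) :=
        le_mul_of_one_le_left (by positivity) ((one_le_div hm).mpr hlam)
    _ = R / (m * c ^ 2) * (c ^ 2 * lam * a + q * c ^ 2 * lam / R) := hscale.symm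
    _ ≤ R / (m * c ^ 2) * Ψ := by gcongr

theorem cumulative_loss_bound_general {p q d : ℕ}
    (hq : 0 < q)
    (T : ℕ) (hT : 0 < T)
    (r m c : ℝ) (hr : 0 ≤ r) (hm : 0 < m) (hc : 0 < c)
    (x : ℕ → Fin p → ℝ) (yt : ℕ → Fin q → ℝ) (ynn : ℕ → Fin q → ℝ)
    (hyt : ∀ t ∈ Finset.Icc 1 T, ∀ i, yt t i = 0 ∨ yt t i = 1)
    (hynn : ∀ t ∈ Finset.Icc 1 T, ∀ i, ynn t i = 0 ∨ ynn t i = 1)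
    (P : Matrix (Fin p) (Fin q) ℝ)
    (V : ℕ → Matrix (Fin q) (Fin d) ℝ)
    (U : Matrix (Fin q) (Fin d) ℝ)
    (lam : ℕ → ℝ) (hlam : ∀ t ∈ Finset.Icc 1 T, m ≤ lam t)
    (hprog : ∀ t ∈ Finset.Icc 1 T,
      c ^ 2 * lam t * frobSq (V t) + (q : ℝ) * c ^ 2 * lam t / (frobSq P * r + q)
        ≤ frobSq (V t - U) - frobSq (V (t + 1) - U))
    (hPx : ∀ t ∈ Finset.Icc 1 T,
      l2normSq (Pᵀ.mulVec (x t) - yt t) ≤ frobSq P * r + q) :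
    ∑ t ∈ Finset.Icc 1 T,
        max 0 (l1norm (yt t - ynn t)
          - (l2normSq ((V t)ᵀ.mulVec (Pᵀ.mulVec (x t)) - (V t)ᵀ.mulVec (ynn t))
              - l2normSq ((V t)ᵀ.mulVec (Pᵀ.mulVec (x t)) - (V t)ᵀ.mulVec (yt t))))
      ≤ frobSq (V 1 - U) * (frobSq P * r + q) / (m * c ^ 2) := by
  set R := frobSq P * r + q
  have hR : 0 < R := by
    have := mul_nonneg (frobSq_nonneg P) hr
    have : (0 : ℝ) < q := Nat.cast_pos.mpr hq
    positivity
  calc _ ≤ ∑ t ∈ Finset.Icc 1 T, R / (m * c ^ 2) * (frobSq (V t - U) - frobSq (V (t + 1) - U)) :=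
        Finset.sum_le_sum fun t ht =>
          (hingeLoss_le _ _ _ _ (hyt t ht) (hynn t ht) (hPx t ht)).trans
            (mul_add_le_div_mul_of_progress (frobSq_nonneg _) q.cast_nonneg hR hm hc
              (hlam t ht) (hprog t ht))
    _ ≤ R / (m * c ^ 2) * frobSq (V 1 - U) := by
        rw [← Finset.mul_sum]
        gcongr
        exact sum_Icc_sub_succ_le hT (frobSq_nonneg _)
    _ = frobSq (V 1 - U) * R / (m * c ^ 2) := by ring

/-- Theorem 1: cumulative loss bound for the online metric learning algorithm.
With per-round loss
`l_t = max{0, ‖y_t − y⁽ᵗ⁾‖₁ − (‖V_tᵀPᵀx_t − V_tᵀy⁽ᵗ⁾‖₂² − ‖V_tᵀPᵀx_t − V_tᵀy_t‖₂²)}`,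
per-round progress `Ψ_t ≥ c²λ_t‖V_t‖_F² + q c² λ_t/(‖P‖_F² r + q)`, `λ_t ≥ m`, and
`‖Pᵀx_t − y_t‖₂² ≤ ‖P‖_F² r + q`, the cumulative loss satisfies
`∑_{t=1}^T l_t ≤ ‖V_1 − U‖_F² (‖P‖_F² r + q)/(m c²)`. -/
theorem cumulative_loss_bound {p q d : ℕ}
    (hp : 0 < p) (hq : 0 < q) (hd : 0 < d) (hdq : d < q)
    (T : ℕ) (hT : 0 < T)
    (r m c : ℝ) (hr : 0 ≤ r) (hm : 0 < m) (hc : 0 < c)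
    (x : ℕ → Fin p → ℝ) (yt : ℕ → Fin q → ℝ) (ynn : ℕ → Fin q → ℝ)
    (hx : ∀ t ∈ Finset.Icc 1 T, (∑ i, (x t i) ^ 2) ≤ r)
    (hyt : ∀ t ∈ Finset.Icc 1 T, ∀ i, yt t i = 0 ∨ yt t i = 1)
    (hynn : ∀ t ∈ Finset.Icc 1 T, ∀ i, ynn t i = 0 ∨ ynn t i = 1)
    (P : Matrix (Fin p) (Fin q) ℝ)
    (V : ℕ → Matrix (Fin q) (Fin d) ℝ) (hV1 : V 1 ≠ 0)
    (U : Matrix (Fin q) (Fin d) ℝ)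
    (lam : ℕ → ℝ) (hlam : ∀ t ∈ Finset.Icc 1 T, m ≤ lam t)
    (hprog : ∀ t ∈ Finset.Icc 1 T,
      c ^ 2 * lam t * frobSq (V t) + (q : ℝ) * c ^ 2 * lam t / (frobSq P * r + q)
        ≤ frobSq (V t - U) - frobSq (V (t + 1) - U))
    (hPx : ∀ t ∈ Finset.Icc 1 T,
      l2normSq (Pᵀ.mulVec (x t) - yt t) ≤ frobSq P * r + q) :
    ∑ t ∈ Finset.Icc 1 T,
        max 0 (l1norm (yt t - ynn t)
          - (l2normSq ((V t)ᵀ.mulVec (Pᵀ.mulVec (x t)) - (V t)ᵀ.mulVec (ynn t))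
              - l2normSq ((V t)ᵀ.mulVec (Pᵀ.mulVec (x t)) - (V t)ᵀ.mulVec (yt t))))
      ≤ frobSq (V 1 - U) * (frobSq P * r + q) / (m * c ^ 2) :=
  cumulative_loss_bound_general hq T hT r m c hr hm hc x yt ynn hyt hynn P V U lam hlam hprog hPx
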